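/- arXiv:math/0410583 — 2 statements merged into one kernel-verified Lean document; each statement's English description precedes it below -/
import Mathlib

section
/- Let G be a finite group, let χ and ψ be irreducible complex characters of G, let α be an irreducible constituent of the product character χψ, and set K = Ker(α). Then there exists an irreducible character θ of K such that θ is a constituent of the restriction χ_K and θ is also a constituent of the restriction of the complex conjugate character ψ̄ to K. -/
/-!
Since `α` is constant on `K = Ker α`, restricting to `K` turns `[χψ, α]` into
`conj (α 1) · [χ_K, ψ̄_K]`, and this restriction stays nonzero because a nonzero `G`-intertwiner
between representations affording `α` and `χψ` is also a `K`-intertwiner. So there is a nonzero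
`K`-intertwiner from the dual of `ψ` (whose character is `ψ̄`) to `χ`; by Maschke's theorem it does
not vanish on some irreducible `K`-subrepresentation, and the character `θ` of that
subrepresentation is a constituent of both `χ_K` and `ψ̄_K`.
-/

open scoped BigOperators

noncomputable section

/-- Inner product of class functions on a finite group. -/
def charInner (G : Type*) [Group G] [Finite G] (φ ψ : G → ℂ) : ℂ :=
  (Nat.card G : ℂ)⁻¹ * ∑ᶠ g : G, φ g * (starRingEnd ℂ) (ψ g)

/-- `χ` is the character of some finite-dimensional complex representation. -/
def IsChar (G : Type*) [Group G] (χ : G → ℂ) : Prop :=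
  ∃ (n : ℕ) (ρ : G →* Matrix.GeneralLinearGroup (Fin n) ℂ),
    ∀ g : G, χ g = Matrix.trace ((ρ g : Matrix (Fin n) (Fin n) ℂ))

/-- `χ` is an irreducible character. -/
def IsIrrChar (G : Type*) [Group G] [Finite G] (χ : G → ℂ) : Prop :=
  IsChar G χ ∧ charInner G χ χ = 1

/-- The kernel of a character, as a set. -/
def charKer {G : Type*} [Group G] (χ : G → ℂ) : Set G := {g | χ g = χ 1}

/-- The complex conjugate character. -/
def conjChar {G : Type*} (χ : G → ℂ) : G → ℂ := fun g => (starRingEnd ℂ) (χ g)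

/-- Restriction of a character to a subgroup. -/
def res {G : Type*} [Group G] (H : Subgroup G) (χ : G → ℂ) : H → ℂ := fun h => χ (h : G)

open Matrix ComplexOrder Representation Module

/-- Unitary trick: `P = ∑ₕ (ρ h)ᴴ (ρ h)` is positive definite and `(ρ g)ᴴ P (ρ g) = P`, so
`(ρ g)ᴴ` is conjugate to `ρ g⁻¹`. -/
theorem Matrix.GeneralLinearGroup.trace_map_inv_eq_star {G : Type*} [Group G] [Finite G]
    {n : Type*} [Fintype n] [DecidableEq n] (ρ : G →* GL n ℂ) (g : G) :
    ((ρ g⁻¹ : GL n ℂ) : Matrix n n ℂ).trace = star ((ρ g : Matrix n n ℂ).trace) := by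
  have := Fintype.ofFinite G
  set M : G → Matrix n n ℂ := fun h => ρ h
  set P := ∑ h, (M h)ᴴ * M h
  have hP : IsUnit P.det := (isUnit_iff_isUnit_det P).mp <| PosDef.isUnit <|
    posDef_sum Finset.univ_nonempty fun h _ =>
      .conjTranspose_mul_self _ (mulVec_injective_of_isUnit (ρ h).isUnit)
  have hM : ∀ a b, M a * M b = M (a * b) := fun a b => by simp [M]
  have hPg : (M g)ᴴ * P * M g = P := by
    simp only [P, Finset.mul_sum, Finset.sum_mul, mul_assoc, hM]
    refine Fintype.sum_equiv (Equiv.mulRight g) _ _ fun h => ?_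
    rw [← mul_assoc, ← conjTranspose_mul, hM]; rfl
  have hstar : (M g)ᴴ = P * M g⁻¹ * P⁻¹ := calc
    (M g)ᴴ = (M g)ᴴ * P * M g * M g⁻¹ * P⁻¹ := by
      rw [mul_assoc _ (M g), hM, mul_inv_cancel, mul_assoc, mul_assoc]
      simp [M, mul_nonsing_inv _ hP]
    _ = P * M g⁻¹ * P⁻¹ := by rw [hPg]
  rw [← trace_conjTranspose, hstar, trace_mul_cycle, nonsing_inv_mul _ hP, one_mul]

theorem Representation.res_character {G V : Type*} [Group G] [AddCommGroup V] [Module ℂ V]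
    (K : Subgroup G) (ρ : Representation ℂ G V) :
    res K ρ.character = character (ρ.comp K.subtype) :=
  rfl

section Characters

variable {G : Type*} [Group G]
  {V W : Type*} [AddCommGroup V] [Module ℂ V] [FiniteDimensional ℂ V]
  [AddCommGroup W] [Module ℂ W] [FiniteDimensional ℂ W]

theorem IsChar.exists_representation {χ : G → ℂ} (hχ : IsChar G χ) :
    ∃ (n : ℕ) (ρ : Representation ℂ G (Fin n → ℂ)), ρ.character = χ := by
  obtain ⟨n, ρ, hρ⟩ := hχ
  refine ⟨n, (Matrix.toLinAlgEquiv').toMonoidHom.comp ((Units.coeHom _).comp ρ), ?_⟩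
  ext g
  exact (hρ g).symm ▸ Matrix.trace_toLin'_eq _

theorem Representation.isChar_character (ρ : Representation ℂ G V) : IsChar G ρ.character := by
  let b := Module.finBasis ℂ V
  refine ⟨finrank ℂ V, (Units.map (LinearMap.toMatrixAlgEquiv b).toMonoidHom).comp ρ.toHomUnits,
    fun g => ?_⟩
  exact LinearMap.trace_eq_matrix_trace ℂ b _

variable [Finite G]

theorem IsChar.apply_inv {χ : G → ℂ} (hχ : IsChar G χ) (g : G) :
    χ g⁻¹ = starRingEnd ℂ (χ g) := by
  obtain ⟨n, ρ, hρ⟩ := hχ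
  rw [hρ, hρ, Matrix.GeneralLinearGroup.trace_map_inv_eq_star, starRingEnd_apply]

theorem Representation.conjChar_character (ρ : Representation ℂ G V) :
    conjChar ρ.character = ρ.dual.character := by
  ext g
  rw [conjChar, char_dual, ρ.isChar_character.apply_inv]

theorem Representation.charInner_character (ρ : Representation ℂ G V)
    (σ : Representation ℂ G W) :
    charInner G σ.character ρ.character = finrank ℂ (IntertwiningMap ρ σ) := by
  have := Fintype.ofFinite G
  have := invertibleOfNonzero (Nat.cast_ne_zero.mpr Nat.card_pos.ne' : (Nat.card G : ℂ) ≠ 0)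
  rw [← card_inv_mul_sum_char_mul_char_eq_finrank, charInner, finsum_eq_sum_of_fintype]
  simp_rw [ρ.isChar_character.apply_inv]

theorem Representation.charInner_character_ne_zero_iff (ρ : Representation ℂ G V)
    (σ : Representation ℂ G W) :
    charInner G σ.character ρ.character ≠ 0 ↔ Nontrivial (IntertwiningMap ρ σ) := by
  rw [charInner_character, Nat.cast_ne_zero, ← Nat.pos_iff_ne_zero, finrank_pos_iff]

theorem Representation.isIrrChar_character (ρ : Representation ℂ G V) [IsIrreducible ρ] :
    IsIrrChar G ρ.character :=
  ⟨ρ.isChar_character, by simp [charInner_character]⟩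

end Characters

section Subrepresentations

variable {k G H V W : Type*} [Field k] [Monoid G] [Monoid H] [AddCommGroup V] [Module k V]
  [AddCommGroup W] [Module k W] {ρ : Representation k G V} {σ : Representation k G W}

def Representation.IntertwiningMap.res (φ : H →* G) (f : IntertwiningMap ρ σ) :
    IntertwiningMap (ρ.comp φ) (σ.comp φ) :=
  ⟨f.toLinearMap, fun h => f.isIntertwining' (φ h)⟩

theorem Representation.IntertwiningMap.res_injective (φ : H →* G) :
    Function.Injective (IntertwiningMap.res (ρ := ρ) (σ := σ) φ) := by
  intro f g h
  have := congrArg IntertwiningMap.toLinearMap h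
  exact IntertwiningMap.ext this

namespace Subrepresentation

def subtype (S : Subrepresentation ρ) : IntertwiningMap S.toRepresentation ρ :=
  ⟨S.toSubmodule.subtype, fun _ => rfl⟩

theorem toSubmodule_eq_bot {S : Subrepresentation ρ} : S.toSubmodule = ⊥ ↔ S = ⊥ :=
  toSubmodule_injective.eq_iff (b := ⊥)

theorem isIrreducible_toRepresentation_of_isAtom {S : Subrepresentation ρ} (hS : IsAtom S) :
    IsIrreducible S.toRepresentation where
  exists_pair_ne := by
    obtain ⟨x, hxS, hx⟩ := (Submodule.ne_bot_iff _).mp (toSubmodule_eq_bot.not.mpr hS.1)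
    refine ⟨⊥, ⊤, fun h => hx ?_⟩
    have : (⟨x, hxS⟩ : S.toSubmodule) ∈ (⊥ : Subrepresentation S.toRepresentation) :=
      h ▸ Submodule.mem_top
    exact congrArg Subtype.val ((Submodule.mem_bot k).mp this)
  eq_bot_or_eq_top T := by
    have hR : (S.subtype.comp T.subtype).range ≤ S := by
      rintro _ ⟨y, rfl⟩
      exact (y : S.toSubmodule).2
    rcases hS.le_iff.mp hR with hR | hR
    · left
      refine toSubmodule_eq_bot.mp ((Submodule.eq_bot_iff _).mpr fun y hy => Subtype.ext ?_)
      have : (y : V) ∈ (S.subtype.comp T.subtype).range := ⟨⟨y, hy⟩, rfl⟩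
      exact (Submodule.mem_bot k).mp (toSubmodule_eq_bot.mpr hR ▸ this)
    · right
      refine eq_top_iff.mpr fun y _ => ?_
      obtain ⟨z, hz⟩ : (y : V) ∈ (S.subtype.comp T.subtype).range :=
        (SetLike.ext_iff.mp hR _).mpr y.2
      exact Subtype.ext hz ▸ z.2

end Subrepresentation

end Subrepresentations

theorem Representation.IntertwiningMap.exists_isIrreducible_comp_subtype_ne_zero
    {k G V W : Type*} [Field k] [Group G] [Finite G] [NeZero (Nat.card G : k)]
    [AddCommGroup V] [Module k V] [FiniteDimensional k V] [AddCommGroup W] [Module k W]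
    {ρ : Representation k G V} {σ : Representation k G W} {f : IntertwiningMap ρ σ} (hf : f ≠ 0) :
    ∃ S : Subrepresentation ρ, IsIrreducible S.toRepresentation ∧ f.comp S.subtype ≠ 0 := by
  have : WellFoundedLT (Subrepresentation ρ) :=
    StrictMono.wellFoundedLT (f := Subrepresentation.toSubmodule) fun _ _ h => h
  have : IsAtomic (Subrepresentation ρ) := isAtomic_of_orderBot_wellFounded_lt wellFounded_lt
  obtain ⟨C, hC⟩ := exists_isCompl f.ker
  have hC0 : C ≠ ⊥ := by
    rintro rfl
    have hker : f.ker = ⊤ := by simpa using hC.sup_eq_top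
    refine hf (IntertwiningMap.ext (LinearMap.ext fun v => ?_))
    exact (IntertwiningMap.mem_ker _ _ f v).mp (hker ▸ Submodule.mem_top)
  obtain ⟨S, hS, hSC⟩ := (eq_bot_or_exists_atom_le C).resolve_left hC0
  refine ⟨S, Subrepresentation.isIrreducible_toRepresentation_of_isAtom hS, fun h0 => ?_⟩
  obtain ⟨x, hxS, hx⟩ :=
    (Submodule.ne_bot_iff _).mp (Subrepresentation.toSubmodule_eq_bot.not.mpr hS.1)
  have hfx : f x = 0 := congrArg (fun F => F ⟨x, hxS⟩) h0
  have hx0 : x ∈ f.ker ⊓ S := ⟨hfx, hxS⟩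
  rw [(hC.disjoint.mono_right hSC).eq_bot] at hx0
  exact hx ((Submodule.mem_bot k).mp hx0)

theorem Representation.charInner_res_character_ne_zero {G V W : Type*} [Group G] [Finite G]
    [AddCommGroup V] [Module ℂ V] [FiniteDimensional ℂ V]
    [AddCommGroup W] [Module ℂ W] [FiniteDimensional ℂ W]
    (K : Subgroup G) {ρ : Representation ℂ G V} {σ : Representation ℂ G W}
    (h : charInner G σ.character ρ.character ≠ 0) :
    charInner K (res K σ.character) (res K ρ.character) ≠ 0 := by
  have := (charInner_character_ne_zero_iff ρ σ).mp h
  exact (charInner_character_ne_zero_iff (ρ.comp K.subtype) (σ.comp K.subtype)).mpr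
    (IntertwiningMap.res_injective K.subtype).nontrivial

theorem charInner_res_mul_of_subset_charKer {G : Type*} [Group G] [Finite G] {K : Subgroup G}
    {α : G → ℂ} (hK : (K : Set G) ⊆ charKer α) (φ ψ : G → ℂ) :
    charInner K (res K (φ * ψ)) (res K α) =
      starRingEnd ℂ (α 1) * charInner K (res K φ) (res K (conjChar ψ)) := by
  have := Fintype.ofFinite K
  simp only [charInner, finsum_eq_sum_of_fintype, Finset.mul_sum]
  refine Finset.sum_congr rfl fun k _ => ?_
  have hk : α k = α 1 := hK k.2
  simp only [res, conjChar, Pi.mul_apply, Complex.conj_conj, hk]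
  ring

theorem stmt_0 {G : Type*} [Group G] [Finite G] (χ ψ α : G → ℂ)
    (hχ : IsIrrChar G χ) (hψ : IsIrrChar G ψ) (hα : IsIrrChar G α)
    (hcon : charInner G (χ * ψ) α ≠ 0)
    (K : Subgroup G) (hK : (K : Set G) = charKer α) :
    ∃ θ : K → ℂ, IsIrrChar K θ ∧ charInner K (res K χ) θ ≠ 0 ∧
      charInner K (res K (conjChar ψ)) θ ≠ 0 := by
  obtain ⟨_, ρχ, rfl⟩ := hχ.1.exists_representation
  obtain ⟨_, ρψ, rfl⟩ := hψ.1.exists_representation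
  obtain ⟨_, ρα, rfl⟩ := hα.1.exists_representation
  rw [← char_tensor ρχ ρψ] at hcon
  have hres := charInner_res_character_ne_zero K hcon
  rw [char_tensor, charInner_res_mul_of_subset_charKer hK.subset, conjChar_character,
    res_character, res_character] at hres
  have := (charInner_character_ne_zero_iff _ _).mp (right_ne_zero_of_mul hres)
  obtain ⟨f, hf⟩ := exists_ne (0 : IntertwiningMap (ρψ.dual.comp K.subtype) (ρχ.comp K.subtype))
  obtain ⟨S, hS, hfS⟩ := f.exists_isIrreducible_comp_subtype_ne_zero hf
  refine ⟨S.toRepresentation.character, S.toRepresentation.isIrrChar_character, ?_, ?_⟩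
  · rw [res_character, charInner_character_ne_zero_iff]
    exact nontrivial_of_ne _ _ hfS
  · rw [conjChar_character, res_character, charInner_character_ne_zero_iff]
    refine nontrivial_of_ne S.subtype 0 fun h => hfS ?_
    rw [h, IntertwiningMap.comp_def, map_zero]
end
end

section
/- Let G be a finite group, K a normal subgroup, and χ, ψ irreducible characters of G. Suppose θ is an irreducible character of K that is a constituent of χ restricted to K and also a constituent of ψ̄ restricted to K, and suppose θ is linear (θ(1) = 1). Then the commutator subgroup [K, K] is contained in Ker(χψ). -/
open scoped BigOperators

noncomputable section

/-!
A linear constituent `θ` of `χ_K` is trivial on `[K, K]`, so the nonzero matrix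
`P = ∑ₖ conj θ(k) ρ(k)` (its columns span the `θ`-eigenspace of `ρ|_K`) is fixed by the normal
subgroup `[K, K]`. For irreducible `ρ` this forces `[K, K] ≤ ker ρ`: since `⟨χ, χ⟩ = 1`, the
`ρ`-invariant Hermitian forms make up a line, so the averaged form `∑_g (ρ_g P)(ρ_g P)ᴴ`, fixed by
`[K, K]` from the left, is a multiple of the positive definite `∑_g ρ_g ρ_gᴴ`.
Apply this to `χ` and to `ψ̄`, and use `ker χ ∩ ker ψ ⊆ ker χψ`.
-/

open Matrix Module
open scoped Kronecker ComplexOrder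

lemma Matrix.eq_zero_of_sum_mul_conjTranspose_self_eq_zero {α ι κ : Type*} [Fintype ι]
    [Fintype κ] {s : Finset α} {X : α → Matrix ι κ ℂ} (h : ∑ a ∈ s, X a * (X a)ᴴ = 0) {a : α}
    (ha : a ∈ s) : X a = 0 := by
  have htr : ∑ b ∈ s, (X b * (X b)ᴴ).trace = 0 := by rw [← trace_sum, h, trace_zero]
  rw [Finset.sum_eq_zero_iff_of_nonneg
    fun b _ => (posSemidef_self_mul_conjTranspose (X b)).trace_nonneg] at htr
  exact trace_mul_conjTranspose_self_eq_zero_iff.mp (htr a ha)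

lemma trace_sum_starRingEnd_smul_eq_card_mul_charInner {H ι : Type*} [Group H] [Fintype H]
    [Fintype ι] (R : H → Matrix ι ι ℂ) (θ : H → ℂ) :
    trace (∑ h, starRingEnd ℂ (θ h) • R h) =
      Nat.card H * charInner H (fun h => trace (R h)) θ := by
  rw [charInner, finsum_eq_sum_of_fintype, ← mul_assoc, mul_inv_cancel₀ (by simp), one_mul,
    trace_sum]
  simp only [trace_smul, smul_eq_mul, mul_comm]

namespace MonoidHom

variable {ι κ : Type*} [Fintype ι] [Fintype κ] [DecidableEq ι] {G : Type*} [Group G]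
  (ρ : G →* Matrix ι ι ℂ)

lemma posDef_sum_mul_conjTranspose [Fintype G] : (∑ g, ρ g * (ρ g)ᴴ).PosDef := by
  classical
  rw [← Finset.add_sum_erase _ _ (Finset.mem_univ 1), map_one, Matrix.one_mul, conjTranspose_one]
  exact PosDef.one.add_posSemidef
    (posSemidef_sum _ fun g _ => posSemidef_self_mul_conjTranspose _)

lemma mul_sum_mul_conjTranspose_mul [Fintype G] {W : G → Matrix ι κ ℂ}
    (hW : ∀ h g, ρ h * W g = W (h * g)) (h : G) :
    ρ h * (∑ g, W g * (W g)ᴴ) * (ρ h)ᴴ = ∑ g, W g * (W g)ᴴ := calc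
  _ = ∑ g, W (h * g) * (W (h * g))ᴴ := by
    simp only [Finset.mul_sum, Finset.sum_mul, ← hW, conjTranspose_mul, Matrix.mul_assoc]
  _ = _ := Fintype.sum_equiv (Equiv.mulLeft h) _ _ fun _ => rfl

/-- `X ↦ ρ g * X * (ρ g)ᴴ`, transported to vectors by `Matrix.vec`. -/
def conjRep : Representation ℂ G (ι × ι → ℂ) where
  toFun g := toLin' ((ρ g).map (starRingEnd ℂ) ⊗ₖ ρ g)
  map_one' := by simp [Module.End.one_eq_id]
  map_mul' g h := by
    rw [map_mul, Matrix.map_mul, mul_kronecker_mul, toLin'_mul, Module.End.mul_eq_comp]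

lemma conjRep_apply_vec (g : G) (X : Matrix ι ι ℂ) :
    ρ.conjRep g (vec X) = vec (ρ g * X * (ρ g)ᴴ) :=
  kronecker_mulVec_vec _ _ _

lemma vec_mem_invariants_conjRep {X : Matrix ι ι ℂ} :
    vec X ∈ ρ.conjRep.invariants ↔ ∀ g, ρ g * X * (ρ g)ᴴ = X := by
  simp only [Representation.mem_invariants, conjRep_apply_vec, vec_inj]

lemma character_conjRep (g : G) :
    ρ.conjRep.character g = starRingEnd ℂ (trace (ρ g)) * trace (ρ g) := by
  rw [Representation.character, conjRep, MonoidHom.coe_mk, OneHom.coe_mk, trace_toLin'_eq,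
    trace_kronecker, AddMonoidHom.map_trace]

variable [Finite G]

lemma finrank_invariants_conjRep
    (hirr : charInner G (fun g => trace (ρ g)) (fun g => trace (ρ g)) = 1) :
    finrank ℂ ρ.conjRep.invariants = 1 := by
  have := Fintype.ofFinite G
  have : Invertible (Nat.card G : ℂ) := invertibleOfNonzero (by simp)
  rw [charInner, finsum_eq_sum_of_fintype] at hirr
  have h := ρ.conjRep.card_inv_mul_sum_char_eq_finrank
  simp only [character_conjRep, mul_comm (starRingEnd ℂ _), hirr] at h
  exact_mod_cast h.symm

theorem map_eq_one_of_forall_mul_eq_self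
    (hirr : charInner G (fun g => trace (ρ g)) (fun g => trace (ρ g)) = 1)
    (N : Subgroup G) [N.Normal] {P : Matrix ι ι ℂ} (hP : P ≠ 0) (hfix : ∀ y ∈ N, ρ y * P = P)
    {x : G} (hx : x ∈ N) : ρ x = 1 := by
  have := Fintype.ofFinite G
  set S := ∑ g, ρ g * (ρ g)ᴴ
  set A := ∑ g, (ρ g * P) * (ρ g * P)ᴴ
  have hA : A ≠ 0 := fun h => hP <| by
    simpa using eq_zero_of_sum_mul_conjTranspose_self_eq_zero h (Finset.mem_univ 1)
  have hxA : ρ x * A = A := by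
    refine (Finset.mul_sum _ _ _).trans (Finset.sum_congr rfl fun g _ => ?_)
    have hconj : g⁻¹ * x * g ∈ N := by simpa using Subgroup.Normal.conj_mem ‹_› x hx g⁻¹
    have hxg : ρ x * (ρ g * P) = ρ g * P := by
      rw [← Matrix.mul_assoc, ← map_mul, show x * g = g * (g⁻¹ * x * g) by group, map_mul,
        Matrix.mul_assoc, hfix _ hconj]
    rw [← Matrix.mul_assoc, hxg]
  have hinv : ∀ {W : G → Matrix ι ι ℂ}, (∀ h g, ρ h * W g = W (h * g)) →
      vec (∑ g, W g * (W g)ᴴ) ∈ ρ.conjRep.invariants := fun hW =>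
    (vec_mem_invariants_conjRep ρ).mpr (ρ.mul_sum_mul_conjTranspose_mul hW)
  have hAinv : vec A ∈ ρ.conjRep.invariants :=
    hinv fun h g => by rw [← Matrix.mul_assoc, map_mul]
  have hSinv : vec S ∈ ρ.conjRep.invariants := hinv fun h g => (map_mul ρ h g).symm
  obtain ⟨c, hc⟩ := (finrank_eq_one_iff_of_nonzero' (⟨vec A, hAinv⟩ : ρ.conjRep.invariants)
    (by simpa using hA)).mp (ρ.finrank_invariants_conjRep hirr) ⟨vec S, hSinv⟩
  have hSA : c • A = S := vec_inj.mp (congrArg Subtype.val hc)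
  have hxS : ρ x * S = 1 * S := by rw [Matrix.one_mul, ← hSA, mul_smul_comm, hxA]
  exact ρ.posDef_sum_mul_conjTranspose.isUnit.mul_right_cancel hxS

lemma conj_apply_eq_apply_inv (φ : G →* ℂˣ) (g : G) : starRingEnd ℂ (φ g) = φ g⁻¹ := by
  have hpow : (φ g : ℂ) ^ orderOf g = 1 := by
    rw [← Units.val_pow_eq_pow_val, ← map_pow, pow_orderOf_eq_one, map_one, Units.val_one]
  rw [map_inv, Units.val_inv_eq_inv_val,
    Complex.inv_eq_conj (Complex.norm_eq_one_of_pow_eq_one hpow (orderOf_pos g).ne')]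

lemma mul_sum_conj_smul [Fintype G] (φ : G →* ℂˣ) (h : G) :
    ρ h * ∑ k, starRingEnd ℂ (φ k) • ρ k = (φ h : ℂ) • ∑ k, starRingEnd ℂ (φ k) • ρ k := calc
  _ = ∑ k, starRingEnd ℂ (φ (h⁻¹ * k)) • ρ k := by
    rw [Finset.mul_sum]
    exact Fintype.sum_equiv (Equiv.mulLeft h) _ _ fun k => by simp [← map_mul]
  _ = _ := by
    simp only [Finset.smul_sum, smul_smul, φ.conj_apply_eq_apply_inv, map_mul, Units.val_mul,
      inv_inv]

end MonoidHom

section Characters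

variable {G : Type*} [Group G]

lemma IsChar.exists_units_hom_of_map_one {θ : G → ℂ} (hθ : IsChar G θ) (h1 : θ 1 = 1) :
    ∃ φ : G →* ℂˣ, ∀ g, θ g = φ g := by
  obtain ⟨n, ρ, hρ⟩ := hθ
  obtain rfl : n = 1 := by simpa [hρ] using h1
  exact ⟨GeneralLinearGroup.det.comp ρ, fun g => by simp [hρ, trace_fin_one]⟩

lemma IsChar.conjChar {χ : G → ℂ} (hχ : IsChar G χ) : IsChar G (conjChar χ) := by
  obtain ⟨n, ρ, hρ⟩ := hχ
  exact ⟨n, (Units.map (starRingEnd ℂ).mapMatrix.toMonoidHom).comp ρ,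
    fun g => by simp [_root_.conjChar, hρ, AddMonoidHom.map_trace]⟩

lemma charInner_conjChar [Finite G] (φ ψ : G → ℂ) :
    charInner G (conjChar φ) (conjChar ψ) = starRingEnd ℂ (charInner G φ ψ) := by
  have := Fintype.ofFinite G
  simp [charInner, conjChar, finsum_eq_sum_of_fintype, map_sum]

lemma IsIrrChar.conjChar [Finite G] {χ : G → ℂ} (hχ : IsIrrChar G χ) :
    IsIrrChar G (conjChar χ) :=
  ⟨hχ.1.conjChar, by rw [charInner_conjChar, hχ.2, map_one]⟩

lemma charKer_conjChar (χ : G → ℂ) : charKer (conjChar χ) = charKer χ := by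
  ext g
  exact (starRingEnd ℂ).injective.eq_iff

lemma charKer_inter_subset_charKer_mul (χ ψ : G → ℂ) :
    charKer χ ∩ charKer ψ ⊆ charKer (χ * ψ) := fun g ⟨hχ, hψ⟩ => by
  simp only [charKer, Set.mem_ofPred_eq, Pi.mul_apply] at hχ hψ ⊢
  rw [hχ, hψ]

theorem commutator_subset_charKer [Finite G] (K : Subgroup G) [K.Normal] {χ : G → ℂ}
    (hχ : IsIrrChar G χ) {θ : K → ℂ} (hθ : IsChar K θ) (hθ1 : θ 1 = 1)
    (h : charInner K (res K χ) θ ≠ 0) : ((⁅K, K⁆ : Subgroup G) : Set G) ⊆ charKer χ := by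
  have := Fintype.ofFinite K
  obtain ⟨⟨n, ρ, hρ⟩, hirr⟩ := hχ
  obtain ⟨φ, hφ⟩ := hθ.exists_units_hom_of_map_one hθ1
  set R := (Units.coeHom _).comp ρ
  obtain rfl : χ = fun g => trace (R g) := funext hρ
  obtain rfl : θ = fun k => (φ k : ℂ) := funext hφ
  set P := ∑ k, starRingEnd ℂ (φ k) • (R.comp K.subtype) k
  have hP : P ≠ 0 := by
    intro hP
    have htr : trace P = _ :=
      trace_sum_starRingEnd_smul_eq_card_mul_charInner (R.comp K.subtype) (fun k => (φ k : ℂ))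
    rw [hP, trace_zero, eq_comm, mul_eq_zero] at htr
    exact h (htr.resolve_left (by simp))
  have hfix : ∀ y ∈ ⁅K, K⁆, R y * P = P := by
    rw [← K.map_subtype_commutator]
    rintro _ ⟨k, hk, rfl⟩
    refine ((R.comp K.subtype).mul_sum_conj_smul φ k).trans ?_
    rw [MonoidHom.mem_ker.mp (Abelianization.commutator_subset_ker φ hk), Units.val_one, one_smul]
  intro x hx
  show trace (R x) = trace (R 1)
  rw [R.map_eq_one_of_forall_mul_eq_self hirr ⁅K, K⁆ hP hfix hx, map_one]

end Characters

theorem stmt_2 {G : Type*} [Group G] [Finite G] (K : Subgroup G) (hKn : K.Normal)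
    (χ ψ : G → ℂ) (hχ : IsIrrChar G χ) (hψ : IsIrrChar G ψ)
    (θ : K → ℂ) (hθ : IsIrrChar K θ) (hθlin : θ 1 = 1)
    (h1 : charInner K (res K χ) θ ≠ 0)
    (h2 : charInner K (res K (conjChar ψ)) θ ≠ 0) :
    ((⁅K, K⁆ : Subgroup G) : Set G) ⊆ charKer (χ * ψ) := by
  have hχK := commutator_subset_charKer K hχ hθ.1 hθlin h1
  have hψK := commutator_subset_charKer K hψ.conjChar hθ.1 hθlin h2
  rw [charKer_conjChar] at hψK
  exact (Set.subset_inter hχK hψK).trans (charKer_inter_subset_charKer_mul χ ψ)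
end
end
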